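/- arXiv:1803.11152 — 4 statements merged into one kernel-verified Lean document; each statement's English description precedes it below -/
import Mathlib

section
/- Let λ > 0 and γ ≥ 0 with 4λγ < 1. If p₁, p₂ are real numbers satisfying λp₁² + p₁ = q₁ and λp₂² + p₂ = q₂ with p₁, p₂ ≥ −2γ/(1 + √(1 − 4λγ)), then |p₁ − p₂| ≤ (1 + √(1 − 4λγ))/(1 + √(1 − 4λγ) − 4λγ) · |q₁ − q₂|. -/
/-- Scalar Lipschitz estimate: if `λp₁² + p₁ = q₁` and `λp₂² + p₂ = q₂` with
`p₁, p₂ ≥ -2γ/(1 + √(1 - 4λγ))`, `λ > 0`, `γ ≥ 0`, `4λγ < 1`, then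
`|p₁ - p₂| ≤ (1 + √(1 - 4λγ))/(1 + √(1 - 4λγ) - 4λγ) · |q₁ - q₂|`. -/
theorem stmt_4 (l γ p₁ p₂ q₁ q₂ : ℝ) (hl : 0 < l) (hγ : 0 ≤ γ) (hlγ : 4 * l * γ < 1)
    (h₁ : l * p₁ ^ 2 + p₁ = q₁) (h₂ : l * p₂ ^ 2 + p₂ = q₂)
    (hp₁ : -(2 * γ) / (1 + Real.sqrt (1 - 4 * l * γ)) ≤ p₁)
    (hp₂ : -(2 * γ) / (1 + Real.sqrt (1 - 4 * l * γ)) ≤ p₂) :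
    |p₁ - p₂| ≤
      (1 + Real.sqrt (1 - 4 * l * γ)) / (1 + Real.sqrt (1 - 4 * l * γ) - 4 * l * γ) *
        |q₁ - q₂| := by
  set s := Real.sqrt (1 - 4 * l * γ) with hs
  have h0 : 0 < 1 - 4 * l * γ := by linarith
  have hspos : 0 < s := Real.sqrt_pos.mpr h0
  have hsq : s ^ 2 = 1 - 4 * l * γ := Real.sq_sqrt h0.le
  have h1s : 0 < 1 + s := by linarith
  have hD : 0 < 1 + s - 4 * l * γ := by nlinarith
  have hp₁' : -(2 * γ) ≤ p₁ * (1 + s) := (div_le_iff₀ h1s).mp hp₁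
  have hp₂' : -(2 * γ) ≤ p₂ * (1 + s) := (div_le_iff₀ h1s).mp hp₂
  have hA : 1 + s - 4 * l * γ ≤ (l * (p₁ + p₂) + 1) * (1 + s) := by
    nlinarith [mul_le_mul_of_nonneg_left hp₁' hl.le,
      mul_le_mul_of_nonneg_left hp₂' hl.le]
  have hApos : 0 < l * (p₁ + p₂) + 1 := by nlinarith
  have hq : q₁ - q₂ = (p₁ - p₂) * (l * (p₁ + p₂) + 1) := by
    rw [← h₁, ← h₂]; ring
  have habs : |q₁ - q₂| = |p₁ - p₂| * (l * (p₁ + p₂) + 1) := by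
    rw [hq, abs_mul, abs_of_pos hApos]
  rw [habs, div_mul_eq_mul_div, le_div_iff₀ hD]
  have hx : 0 ≤ |p₁ - p₂| := abs_nonneg _
  nlinarith [mul_le_mul_of_nonneg_left hA hx]
end

section
/- Let A ∈ L(V,V*) satisfy ⟨Au,u⟩ ≥ μ_V‖u‖²_V for all u ∈ V. Then for every P ∈ 𝒱 = HS(V*,H) ∩ HS(H,V), one has ⟨PA, P⟩ ≥ μ_V ‖P‖²_{HS(V*,H)} and ⟨A*P, P⟩ ≥ μ_V ‖P‖²_{HS(H,V)}; in particular ⟨A*P + PA, P⟩ ≥ μ_V ‖P‖²_𝒱. -/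
/-! In an orthonormal basis `(eₙ)` of `H` both pairings are sums of diagonal values
`⟨A P eₙ, P eₙ⟩` resp. `⟨A P' eₙ, P' eₙ⟩`, so coercivity of `A` applies term by term;
boundedness of `A` makes these sums converge. -/

open scoped RealInnerProductSpace

section Coercive

variable {V ι : Type*} [SeminormedAddCommGroup V] [NormedSpace ℝ V]

lemma summable_apply_apply_of_summable_norm_sq (A : V →L[ℝ] StrongDual ℝ V) {f : ι → V}
    (hf : Summable fun n => ‖f n‖ ^ 2) : Summable fun n => A (f n) (f n) := by
  refine .of_norm <| .of_nonneg_of_le (fun _ => norm_nonneg _) (fun n => ?_) (hf.mul_left ‖A‖)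
  calc ‖A (f n) (f n)‖ ≤ ‖A‖ * ‖f n‖ * ‖f n‖ := A.le_opNorm₂ _ _
    _ = ‖A‖ * ‖f n‖ ^ 2 := by ring

lemma mul_tsum_norm_sq_le_tsum_apply_apply (A : V →L[ℝ] StrongDual ℝ V) {μ : ℝ}
    (hA : ∀ u, μ * ‖u‖ ^ 2 ≤ A u u) {f : ι → V} (hf : Summable fun n => ‖f n‖ ^ 2) :
    μ * ∑' n, ‖f n‖ ^ 2 ≤ ∑' n, A (f n) (f n) := by
  rw [← tsum_mul_left]
  exact (hf.mul_left μ).tsum_le_tsum (fun n => hA (f n))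
    (summable_apply_apply_of_summable_norm_sq A hf)

end Coercive

theorem stmt_10_general {V H : Type*} [NormedAddCommGroup V] [InnerProductSpace ℝ V]
    [NormedAddCommGroup H] [InnerProductSpace ℝ H]
    (b : HilbertBasis ℕ ℝ H)
    (A : V →L[ℝ] StrongDual ℝ V) (μV : ℝ)
    (hA : ∀ u : V, μV * ‖u‖ ^ 2 ≤ A u u)
    (P P' : H →L[ℝ] V)
    (hPsum : Summable fun n => ‖P (b n)‖ ^ 2)
    (hP'sum : Summable fun n => ‖P' (b n)‖ ^ 2) :
    (μV * ∑' n, ‖P' (b n)‖ ^ 2 ≤ ∑' n, A (P' (b n)) (P' (b n))) ∧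
      (μV * ∑' n, ‖P (b n)‖ ^ 2 ≤ ∑' n, A (P (b n)) (P (b n))) ∧
      μV * (∑' n, ‖P (b n)‖ ^ 2 + ∑' n, ‖P' (b n)‖ ^ 2) ≤
        ∑' n, A (P (b n)) (P (b n)) + ∑' n, A (P' (b n)) (P' (b n)) := by
  have hP' := mul_tsum_norm_sq_le_tsum_apply_apply A hA hP'sum
  have hP := mul_tsum_norm_sq_le_tsum_apply_apply A hA hPsum
  exact ⟨hP', hP, by linarith [mul_add μV (∑' n, ‖P (b n)‖ ^ 2) (∑' n, ‖P' (b n)‖ ^ 2)]⟩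

/-- Coercivity of the Lyapunov operator on `𝒱 = HS(V*,H) ∩ HS(H,V)`: for a strongly
positive `A : V → V*` and `P ∈ 𝒱` (represented as a Hilbert–Schmidt operator
`P : H → V` together with its adjoint `P' : H → V`, i.e. `⟪jPu, v⟫ = ⟪u, jP'v⟫`),
one has `⟨PA, P⟩ ≥ μ_V ‖P‖²_{HS(V*,H)}` (i.e. `∑ a(P'eₙ, P'eₙ) ≥ μ_V ∑ ‖P'eₙ‖_V²`),
`⟨A*P, P⟩ ≥ μ_V ‖P‖²_{HS(H,V)}`, and in particular
`⟨A*P + PA, P⟩ ≥ μ_V ‖P‖²_𝒱`. -/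
theorem stmt_10 {V H : Type*} [NormedAddCommGroup V] [InnerProductSpace ℝ V] [CompleteSpace V]
    [NormedAddCommGroup H] [InnerProductSpace ℝ H] [CompleteSpace H]
    (j : V →L[ℝ] H) (hjdense : DenseRange j) (hjinj : Function.Injective j)
    (b : HilbertBasis ℕ ℝ H)
    (A : V →L[ℝ] StrongDual ℝ V) (μV : ℝ) (hμ : 0 < μV)
    (hA : ∀ u : V, μV * ‖u‖ ^ 2 ≤ A u u)
    (P P' : H →L[ℝ] V)
    (hadj : ∀ u v : H, ⟪j (P u), v⟫ = ⟪u, j (P' v)⟫)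
    (hPsum : Summable fun n => ‖P (b n)‖ ^ 2)
    (hP'sum : Summable fun n => ‖P' (b n)‖ ^ 2) :
    (μV * ∑' n, ‖P' (b n)‖ ^ 2 ≤ ∑' n, A (P' (b n)) (P' (b n))) ∧
      (μV * ∑' n, ‖P (b n)‖ ^ 2 ≤ ∑' n, A (P (b n)) (P (b n))) ∧
      μV * (∑' n, ‖P (b n)‖ ^ 2 + ∑' n, ‖P' (b n)‖ ^ 2) ≤
        ∑' n, A (P (b n)) (P (b n)) + ∑' n, A (P' (b n)) (P' (b n)) :=
  stmt_10_general b A μV hA P P' hPsum hP'sum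
end

section
/- Let γ ≥ 0, λ > 0 with 4λγ < 1, and let P₁, P₂ be self-adjoint Hilbert–Schmidt operators on H with all eigenvalues ≥ −2γ/(1 + √(1 − 4λγ)). If Q_i = λP_i² + P_i for i = 1, 2, then ‖P₁ − P₂‖_HS ≤ (1 + √(1 − 4λγ))/(1 + √(1 − 4λγ) − 4λγ) · ‖Q₁ − Q₂‖_HS. -/
open scoped RealInnerProductSpace

set_option maxHeartbeats 1000000
set_option linter.unusedSectionVars false

section Aux

variable {H : Type*} [NormedAddCommGroup H] [InnerProductSpace ℝ H] [CompleteSpace H]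

/-- Parseval: the squared matrix entries of a Hilbert–Schmidt operator are summable over ℕ×ℕ. -/
lemma aux_summable_entries (v : ℕ → H)
    (hP : ∀ x y : H, HasSum (fun m => ⟪x, v m⟫ * ⟪v m, y⟫) ⟪x, y⟫) (A : H →L[ℝ] H)
    (hA : Summable fun n => ‖A (v n)‖ ^ 2) :
    Summable fun p : ℕ × ℕ => ⟪A (v p.1), v p.2⟫ ^ 2 := by
  have hsq : ∀ (x : H) (m : ℕ), ⟪x, v m⟫ * ⟪v m, x⟫ = ⟪x, v m⟫ ^ 2 := by
    intro x m
    rw [sq, real_inner_comm x (v m)]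
  have hrow : ∀ x : H, Summable fun m => ⟪x, v m⟫ ^ 2 := by
    intro x
    have h0 := (hP x x).summable
    simpa only [hsq] using h0
  have hrowsum : ∀ x : H, ∑' m, ⟪x, v m⟫ ^ 2 = ‖x‖ ^ 2 := by
    intro x
    have h1 := (hP x x).tsum_eq
    rw [real_inner_self_eq_norm_sq] at h1
    rw [← h1]
    congr 1 with m
    rw [hsq]
  have hnn : (0:(ℕ × ℕ) → ℝ) ≤ fun p : ℕ × ℕ => ⟪A (v p.1), v p.2⟫ ^ 2 :=
    fun p => sq_nonneg _
  have c1 : ∀ x : ℕ, Summable fun y => ⟪A (v x), v y⟫ ^ 2 := fun n => hrow _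
  have c2 : Summable fun x : ℕ => ∑' y, ⟪A (v x), v y⟫ ^ 2 := by
    simpa only [hrowsum] using hA
  exact (summable_prod_of_nonneg hnn).mpr ⟨c1, c2⟩

/-- Summability of the "Hilbert–Schmidt inner product" terms. -/
lemma aux_summable_inner (v : ℕ → H) (A B : H →L[ℝ] H)
    (hA : Summable fun n => ‖A (v n)‖ ^ 2) (hB : Summable fun n => ‖B (v n)‖ ^ 2) :
    Summable fun n => ⟪A (v n), B (v n)⟫ := by
  apply Summable.of_abs
  apply Summable.of_nonneg_of_le (fun n => abs_nonneg _)
    (fun n => ?_) (((hA.add hB).div_const 2))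
  have h1 := abs_real_inner_le_norm (A (v n)) (B (v n))
  have h2 : ‖A (v n)‖ * ‖B (v n)‖ ≤ (‖A (v n)‖ ^ 2 + ‖B (v n)‖ ^ 2) / 2 := by
    nlinarith [sq_nonneg (‖A (v n)‖ - ‖B (v n)‖)]
  calc |⟪A (v n), B (v n)⟫| ≤ ‖A (v n)‖ * ‖B (v n)‖ := h1
    _ ≤ (‖A (v n)‖ ^ 2 + ‖B (v n)‖ ^ 2) / 2 := h2

/-- "Trace transpose": the HS inner product of `A, B` equals that of their adjoints. -/
lemma aux_swap (v : ℕ → H)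
    (hP : ∀ x y : H, HasSum (fun m => ⟪x, v m⟫ * ⟪v m, y⟫) ⟪x, y⟫) (A A' B B' : H →L[ℝ] H)
    (hA : ∀ u w : H, ⟪A u, w⟫ = ⟪u, A' w⟫) (hB : ∀ u w : H, ⟪B u, w⟫ = ⟪u, B' w⟫)
    (hAs : Summable fun n => ‖A (v n)‖ ^ 2) (hBs : Summable fun n => ‖B (v n)‖ ^ 2)
    (hA's : Summable fun n => ‖A' (v n)‖ ^ 2) (hB's : Summable fun n => ‖B' (v n)‖ ^ 2) :
    ∑' n, ⟪A (v n), B (v n)⟫ = ∑' n, ⟪A' (v n), B' (v n)⟫ := by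
  set f : ℕ → ℕ → ℝ := fun n m => ⟪A (v n), v m⟫ * ⟪B (v n), v m⟫ with hf
  have hfg : ∀ n m, f n m = ⟪A' (v m), v n⟫ * ⟪B' (v m), v n⟫ := by
    intro n m
    simp only [hf]
    rw [hA (v n) (v m), hB (v n) (v m), real_inner_comm (v n) (A' (v m)),
      real_inner_comm (v n) (B' (v m))]
  have hPs : ∀ x y : H, HasSum (fun m => ⟪x, v m⟫ * ⟪B y, v m⟫) ⟪x, B y⟫ := by
    intro x y
    have := hP x (B y)
    simpa only [fun m => real_inner_comm (B y) (v m)] using this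
  have hrow : ∀ n, Summable (f n) := by
    intro n
    have := (hP (A (v n)) (B (v n))).summable
    simp only [hf]
    simpa only [fun m => real_inner_comm (B (v n)) (v m)] using this
  have hcol : ∀ m, Summable fun n => f n m := by
    intro m
    have := (hP (A' (v m)) (B' (v m))).summable
    have h2 : Summable fun n => ⟪A' (v m), v n⟫ * ⟪B' (v m), v n⟫ := by
      simpa only [fun n => real_inner_comm (B' (v m)) (v n)] using this
    simpa only [fun n => (hfg n m).symm] using h2
  have hrowval : ∀ n, ∑' m, f n m = ⟪A (v n), B (v n)⟫ := by
    intro n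
    have := (hP (A (v n)) (B (v n))).tsum_eq
    rw [← this]
    congr 1 with m
    simp only [hf]
    rw [real_inner_comm (B (v n)) (v m)]
  have hcolval : ∀ m, ∑' n, f n m = ⟪A' (v m), B' (v m)⟫ := by
    intro m
    have := (hP (A' (v m)) (B' (v m))).tsum_eq
    rw [← this]
    congr 1 with n
    rw [hfg n m, real_inner_comm (v n) (B' (v m))]
  have hsum : Summable (Function.uncurry f) := by
    apply Summable.of_abs
    apply Summable.of_nonneg_of_le (fun p => abs_nonneg _) (fun p => ?_)
      (((aux_summable_entries v hP A hAs).add (aux_summable_entries v hP B hBs)).div_const 2)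
    have h1 : |f p.1 p.2| ≤ |⟪A (v p.1), v p.2⟫| * |⟪B (v p.1), v p.2⟫| := by
      rw [hf]; simp only [abs_mul]; exact le_rfl
    have h2 : |⟪A (v p.1), v p.2⟫| * |⟪B (v p.1), v p.2⟫| ≤
        (⟪A (v p.1), v p.2⟫ ^ 2 + ⟪B (v p.1), v p.2⟫ ^ 2) / 2 := by
      nlinarith [sq_nonneg (|⟪A (v p.1), v p.2⟫| - |⟪B (v p.1), v p.2⟫|),
        sq_abs (⟪A (v p.1), v p.2⟫), sq_abs (⟪B (v p.1), v p.2⟫)]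
    exact h1.trans h2
  calc ∑' n, ⟪A (v n), B (v n)⟫ = ∑' n, ∑' m, f n m := by
        congr 1 with n; exact (hrowval n).symm
    _ = ∑' m, ∑' n, f n m := (Summable.tsum_comm' hsum hrow hcol).symm
    _ = ∑' m, ⟪A' (v m), B' (v m)⟫ := by congr 1 with m; exact hcolval m

/-- Cauchy–Schwarz for tsums of nonnegative reals. -/
lemma aux_cs (f g : ℕ → ℝ) (hf : ∀ n, 0 ≤ f n) (hg : ∀ n, 0 ≤ g n)
    (hf2 : Summable fun n => f n ^ 2) (hg2 : Summable fun n => g n ^ 2) :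
    ∑' n, f n * g n ≤ Real.sqrt (∑' n, f n ^ 2) * Real.sqrt (∑' n, g n ^ 2) := by
  have hfg : Summable fun n => f n * g n := by
    apply Summable.of_nonneg_of_le (fun n => mul_nonneg (hf n) (hg n))
      (fun n => ?_) ((hf2.add hg2).div_const 2)
    nlinarith [sq_nonneg (f n - g n)]
  refine Summable.tsum_le_of_sum_le hfg fun s => ?_
  calc ∑ n ∈ s, f n * g n
      ≤ Real.sqrt (∑ n ∈ s, f n ^ 2) * Real.sqrt (∑ n ∈ s, g n ^ 2) :=
        Real.sum_mul_le_sqrt_mul_sqrt s f g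
    _ ≤ Real.sqrt (∑' n, f n ^ 2) * Real.sqrt (∑' n, g n ^ 2) := by
        have h1 : ∑ n ∈ s, f n ^ 2 ≤ ∑' n, f n ^ 2 := Summable.sum_le_tsum s (fun i _ => sq_nonneg _) hf2
        have h2 : ∑ n ∈ s, g n ^ 2 ≤ ∑' n, g n ^ 2 := Summable.sum_le_tsum s (fun i _ => sq_nonneg _) hg2
        exact mul_le_mul (Real.sqrt_le_sqrt h1) (Real.sqrt_le_sqrt h2)
          (Real.sqrt_nonneg _) (Real.sqrt_nonneg _)

end Aux

/-- Lipschitz dependence for `λP² + P = Q`: if `P₁, P₂` are self-adjoint Hilbert–Schmidt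
operators with eigenvalues `≥ -2γ/(1+√(1-4λγ))` (quadratic-form sense) and
`Qᵢ = λPᵢ² + Pᵢ`, then
`‖P₁ - P₂‖_HS ≤ (1+√(1-4λγ))/(1+√(1-4λγ)-4λγ) · ‖Q₁ - Q₂‖_HS`. -/
theorem stmt_12 {H : Type*} [NormedAddCommGroup H] [InnerProductSpace ℝ H] [CompleteSpace H]
    (b : HilbertBasis ℕ ℝ H)
    (γ l : ℝ) (hγ : 0 ≤ γ) (hl : 0 < l) (hlγ : 4 * l * γ < 1)
    (P₁ P₂ Q₁ Q₂ : H →L[ℝ] H)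
    (hP₁sa : ∀ u v : H, ⟪P₁ u, v⟫ = ⟪u, P₁ v⟫)
    (hP₂sa : ∀ u v : H, ⟪P₂ u, v⟫ = ⟪u, P₂ v⟫)
    (hP₁sum : Summable fun n => ‖P₁ (b n)‖ ^ 2)
    (hP₂sum : Summable fun n => ‖P₂ (b n)‖ ^ 2)
    (hP₁γ : ∀ u : H, -(2 * γ) / (1 + Real.sqrt (1 - 4 * l * γ)) * ‖u‖ ^ 2 ≤ ⟪P₁ u, u⟫)
    (hP₂γ : ∀ u : H, -(2 * γ) / (1 + Real.sqrt (1 - 4 * l * γ)) * ‖u‖ ^ 2 ≤ ⟪P₂ u, u⟫)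
    (hQ₁ : Q₁ = l • (P₁.comp P₁) + P₁)
    (hQ₂ : Q₂ = l • (P₂.comp P₂) + P₂) :
    Real.sqrt (∑' n, ‖(P₁ - P₂) (b n)‖ ^ 2) ≤
      (1 + Real.sqrt (1 - 4 * l * γ)) / (1 + Real.sqrt (1 - 4 * l * γ) - 4 * l * γ) *
        Real.sqrt (∑' n, ‖(Q₁ - Q₂) (b n)‖ ^ 2) := by
  obtain ⟨v, hv⟩ : ∃ v : ℕ → H, v = ⇑b := ⟨_, rfl⟩
  have hPar : ∀ x y : H, HasSum (fun m => ⟪x, v m⟫ * ⟪v m, y⟫) ⟪x, y⟫ := by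
    rw [hv]; exact fun x y => HilbertBasis.hasSum_inner_mul_inner b x y
  rw [← hv] at hP₁sum hP₂sum ⊢
  set s : ℝ := Real.sqrt (1 - 4 * l * γ) with hs_def
  have hpos : (0:ℝ) < 1 - 4 * l * γ := by linarith
  have hs0 : 0 < s := Real.sqrt_pos.mpr hpos
  have hs2 : s ^ 2 = 1 - 4 * l * γ := Real.sq_sqrt hpos.le
  have h1s : (0:ℝ) < 1 + s := by linarith
  have hd : (0:ℝ) < 1 + s - 4 * l * γ := by nlinarith
  set D : H →L[ℝ] H := P₁ - P₂ with hD_def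
  have hDapp : ∀ x, D x = P₁ x - P₂ x := fun x => rfl
  have hDsa : ∀ u w : H, ⟪D u, w⟫ = ⟪u, D w⟫ := by
    intro u w
    simp only [hDapp, inner_sub_left, inner_sub_right, hP₁sa u w, hP₂sa u w]
  -- summability facts
  have hDs : Summable fun n => ‖D (v n)‖ ^ 2 := by
    apply Summable.of_nonneg_of_le (fun n => sq_nonneg _) (fun n => ?_)
      (((hP₁sum.mul_left 2).add (hP₂sum.mul_left 2)))
    have h := norm_sub_le (P₁ (v n)) (P₂ (v n))
    rw [hDapp]
    nlinarith [h, norm_nonneg (P₁ (v n) - P₂ (v n)), norm_nonneg (P₁ (v n)),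
      norm_nonneg (P₂ (v n)), sq_nonneg (‖P₁ (v n)‖ - ‖P₂ (v n)‖)]
  have hcomp : ∀ (C A : H →L[ℝ] H), (Summable fun n => ‖A (v n)‖ ^ 2) →
      Summable fun n => ‖(C.comp A) (v n)‖ ^ 2 := by
    intro C A hA
    apply Summable.of_nonneg_of_le (fun n => sq_nonneg _) (fun n => ?_) (hA.mul_left (‖C‖ ^ 2))
    have h := C.le_opNorm (A (v n))
    simp only [ContinuousLinearMap.comp_apply]
    nlinarith [h, norm_nonneg (C (A (v n))), norm_nonneg (A (v n)), norm_nonneg C]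
  have hP1D : Summable fun n => ‖(P₁.comp D) (v n)‖ ^ 2 := hcomp P₁ D hDs
  have hDP2 : Summable fun n => ‖(D.comp P₂) (v n)‖ ^ 2 := hcomp D P₂ hP₂sum
  have hP2D : Summable fun n => ‖(P₂.comp D) (v n)‖ ^ 2 := hcomp P₂ D hDs
  -- decomposition of Q₁ - Q₂
  have hQdiff : Q₁ - Q₂ = l • (P₁.comp D) + l • (D.comp P₂) + D := by
    rw [hQ₁, hQ₂]
    ext x
    simp only [ContinuousLinearMap.sub_apply, ContinuousLinearMap.add_apply,
      ContinuousLinearMap.smul_apply, ContinuousLinearMap.comp_apply, hDapp, map_sub, smul_sub]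
    abel
  have hQs : Summable fun n => ‖(Q₁ - Q₂) (v n)‖ ^ 2 := by
    have hadd : ∀ (A B : H →L[ℝ] H), (Summable fun n => ‖A (v n)‖ ^ 2) →
        (Summable fun n => ‖B (v n)‖ ^ 2) → Summable fun n => ‖(A + B) (v n)‖ ^ 2 := by
      intro A B hA hB
      apply Summable.of_nonneg_of_le (fun n => sq_nonneg _) (fun n => ?_)
        ((hA.mul_left 2).add (hB.mul_left 2))
      have h := norm_add_le (A (v n)) (B (v n))
      simp only [ContinuousLinearMap.add_apply]
      nlinarith [h, norm_nonneg (A (v n) + B (v n)), norm_nonneg (A (v n)), norm_nonneg (B (v n)),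
        sq_nonneg (‖A (v n)‖ - ‖B (v n)‖)]
    have hsmul : ∀ (c : ℝ) (A : H →L[ℝ] H), (Summable fun n => ‖A (v n)‖ ^ 2) →
        Summable fun n => ‖(c • A) (v n)‖ ^ 2 := by
      intro c A hA
      have heq : (fun n => ‖(c • A) (v n)‖ ^ 2) = fun n => c ^ 2 * ‖A (v n)‖ ^ 2 := by
        funext n
        simp only [ContinuousLinearMap.smul_apply, norm_smul, Real.norm_eq_abs, mul_pow, sq_abs]
      rw [heq]
      exact hA.mul_left _
    rw [hQdiff]
    exact hadd _ _ (hadd _ _ (hsmul l _ hP1D) (hsmul l _ hDP2)) hDs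
  -- the HS inner products
  have hsumJ1 : Summable fun n => ⟪(P₁.comp D) (v n), D (v n)⟫ :=
    aux_summable_inner v _ _ hP1D hDs
  have hsumJ2 : Summable fun n => ⟪(D.comp P₂) (v n), D (v n)⟫ :=
    aux_summable_inner v _ _ hDP2 hDs
  have hsumJ2' : Summable fun n => ⟪(P₂.comp D) (v n), D (v n)⟫ :=
    aux_summable_inner v _ _ hP2D hDs
  -- key1 : expansion
  have key1 : ∑' n, ⟪(Q₁ - Q₂) (v n), D (v n)⟫ =
      l * (∑' n, ⟪(P₁.comp D) (v n), D (v n)⟫) + l * (∑' n, ⟪(D.comp P₂) (v n), D (v n)⟫)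
        + ∑' n, ‖D (v n)‖ ^ 2 := by
    have hterm : ∀ n, ⟪(Q₁ - Q₂) (v n), D (v n)⟫ =
        l * ⟪(P₁.comp D) (v n), D (v n)⟫ + l * ⟪(D.comp P₂) (v n), D (v n)⟫
          + ‖D (v n)‖ ^ 2 := by
      intro n
      rw [hQdiff]
      simp only [ContinuousLinearMap.add_apply, ContinuousLinearMap.smul_apply]
      rw [inner_add_left, inner_add_left, real_inner_smul_left, real_inner_smul_left,
        real_inner_self_eq_norm_sq]
    calc ∑' n, ⟪(Q₁ - Q₂) (v n), D (v n)⟫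
        = ∑' n, (l * ⟪(P₁.comp D) (v n), D (v n)⟫ + l * ⟪(D.comp P₂) (v n), D (v n)⟫
            + ‖D (v n)‖ ^ 2) := by congr 1 with n; exact hterm n
      _ = _ := by
          rw [Summable.tsum_add (((hsumJ1.mul_left l)).add (hsumJ2.mul_left l)) hDs,
            Summable.tsum_add (hsumJ1.mul_left l) (hsumJ2.mul_left l),
            tsum_mul_left, tsum_mul_left]
  -- key2 : trace transpose
  have key2 : ∑' n, ⟪(D.comp P₂) (v n), D (v n)⟫ = ∑' n, ⟪(P₂.comp D) (v n), D (v n)⟫ := by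
    apply aux_swap v hPar (D.comp P₂) (P₂.comp D) D D ?_ hDsa hDP2 hDs hP2D hDs
    intro u w
    simp only [ContinuousLinearMap.comp_apply]
    rw [hDsa (P₂ u) w, hP₂sa u (D w)]
  -- lower bounds from the spectral condition
  have hlow : ∀ (P : H →L[ℝ] H), (∀ u : H, -(2 * γ) / (1 + s) * ‖u‖ ^ 2 ≤ ⟪P u, u⟫) →
      (Summable fun n => ⟪(P.comp D) (v n), D (v n)⟫) →
      -(2 * γ) / (1 + s) * (∑' n, ‖D (v n)‖ ^ 2) ≤ ∑' n, ⟪(P.comp D) (v n), D (v n)⟫ := by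
    intro P hP hsum
    rw [← tsum_mul_left]
    apply Summable.tsum_le_tsum (fun n => ?_) (hDs.mul_left _) hsum
    simpa only [ContinuousLinearMap.comp_apply] using hP (D (v n))
  have key3 := hlow P₁ hP₁γ hsumJ1
  have key4 := hlow P₂ hP₂γ hsumJ2'
  -- Cauchy–Schwarz
  have key5 : ∑' n, ⟪(Q₁ - Q₂) (v n), D (v n)⟫ ≤
      Real.sqrt (∑' n, ‖(Q₁ - Q₂) (v n)‖ ^ 2) * Real.sqrt (∑' n, ‖D (v n)‖ ^ 2) := by
    have h1 : ∑' n, ⟪(Q₁ - Q₂) (v n), D (v n)⟫ ≤ ∑' n, ‖(Q₁ - Q₂) (v n)‖ * ‖D (v n)‖ := by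
      apply Summable.tsum_le_tsum (fun n => real_inner_le_norm _ _)
        (aux_summable_inner v _ _ hQs hDs)
      apply Summable.of_nonneg_of_le (fun n => mul_nonneg (norm_nonneg _) (norm_nonneg _))
        (fun n => ?_) ((hQs.add hDs).div_const 2)
      nlinarith [sq_nonneg (‖(Q₁ - Q₂) (v n)‖ - ‖D (v n)‖)]
    exact h1.trans (aux_cs _ _ (fun n => norm_nonneg _) (fun n => norm_nonneg _) hQs hDs)
  -- putting it together
  set SD : ℝ := ∑' n, ‖D (v n)‖ ^ 2 with hSD
  set SQ : ℝ := ∑' n, ‖(Q₁ - Q₂) (v n)‖ ^ 2 with hSQ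
  have hSDnn : 0 ≤ SD := tsum_nonneg fun n => sq_nonneg _
  have hSQnn : 0 ≤ SQ := tsum_nonneg fun n => sq_nonneg _
  set ND : ℝ := Real.sqrt SD with hND
  set NQ : ℝ := Real.sqrt SQ with hNQ
  have hNDnn : 0 ≤ ND := Real.sqrt_nonneg _
  have hNQnn : 0 ≤ NQ := Real.sqrt_nonneg _
  have hND2 : ND ^ 2 = SD := Real.sq_sqrt hSDnn
  have hmain : (1 - 4 * l * γ / (1 + s)) * SD ≤ NQ * ND := by
    have hc : -(2 * γ) / (1 + s) * SD ≤ ∑' n, ⟪(P₁.comp D) (v n), D (v n)⟫ := key3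
    have hc2 : -(2 * γ) / (1 + s) * SD ≤ ∑' n, ⟪(P₂.comp D) (v n), D (v n)⟫ := key4
    have h5 := key5
    rw [key1, key2] at h5
    have e1 : l * (-(2 * γ) / (1 + s) * SD) ≤ l * ∑' n, ⟪(P₁.comp D) (v n), D (v n)⟫ :=
      mul_le_mul_of_nonneg_left hc hl.le
    have e2 : l * (-(2 * γ) / (1 + s) * SD) ≤ l * ∑' n, ⟪(P₂.comp D) (v n), D (v n)⟫ :=
      mul_le_mul_of_nonneg_left hc2 hl.le
    have e3 : (1 - 4 * l * γ / (1 + s)) * SD =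
        l * (-(2 * γ) / (1 + s) * SD) + l * (-(2 * γ) / (1 + s) * SD) + SD := by ring
    linarith [e1, e2, h5]
  -- final algebra
  show ND ≤ (1 + s) / (1 + s - 4 * l * γ) * NQ
  have hk : (1 - 4 * l * γ / (1 + s)) = (1 + s - 4 * l * γ) / (1 + s) := by
    field_simp
  rcases eq_or_lt_of_le hNDnn with h0 | h0
  · rw [← h0]
    positivity
  · have h1 : (1 + s - 4 * l * γ) / (1 + s) * ND ^ 2 ≤ NQ * ND := by
      rw [← hk, hND2]; exact hmain
    have h2 : (1 + s - 4 * l * γ) * ND ≤ NQ * (1 + s) := by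
      rw [div_mul_eq_mul_div, div_le_iff₀ h1s] at h1
      nlinarith [h1, h0]
    rw [div_mul_eq_mul_div, le_div_iff₀ hd]
    nlinarith [h2]
end

section
/- For real numbers a ≥ μ/C², q ≥ −γ², p ≥ −γ with 0 ≤ γ < μ/C² and τ > 0, the larger root α of the quadratic α² + 2α(a + 1/(2τ)) − q − p/τ = 0, given by α = (q + p/τ)/(a + 1/(2τ) + √((a + 1/(2τ))² + q + p/τ)), satisfies α ≥ −γ. -/
set_option maxHeartbeats 1000000


/-- For real `a ≥ μ/C²`, `q ≥ -γ²`, `p ≥ -γ` with `0 ≤ γ < μ/C²` and `τ > 0`, the larger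
root `α = (q + p/τ) / (a + 1/(2τ) + √((a + 1/(2τ))² + q + p/τ))` of
`α² + 2α(a + 1/(2τ)) - q - p/τ = 0` satisfies `α ≥ -γ`. -/
theorem stmt_14 (μ C τ γ a q p : ℝ) (hμ : 0 < μ) (hC : 0 < C) (hτ : 0 < τ)
    (hγ0 : 0 ≤ γ) (hγ : γ < μ / C ^ 2) (ha : μ / C ^ 2 ≤ a)
    (hq : -γ ^ 2 ≤ q) (hp : -γ ≤ p) :
    -γ ≤ (q + p / τ) /
        (a + 1 / (2 * τ) + Real.sqrt ((a + 1 / (2 * τ)) ^ 2 + q + p / τ)) := by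
  have hγa : γ < a := lt_of_lt_of_le hγ ha
  have ha0 : (0:ℝ) ≤ a := le_trans hγ0 hγa.le
  set u : ℝ := 1 / (2 * τ) with hu
  have hupos : 0 < u := by rw [hu]; positivity
  have hτu : 1 / τ = 2 * u := by rw [hu]; field_simp
  set b : ℝ := a + u with hb
  set s : ℝ := q + p / τ with hs
  have hD : (a + u) ^ 2 + q + p / τ = b ^ 2 + s := by rw [hb, hs]; ring
  rw [hD]
  have hbpos : 0 < b := by rw [hb]; linarith
  have hslb : -γ ^ 2 - 2 * γ * u ≤ s := by
    have h1 : -γ / τ ≤ p / τ := div_le_div_of_nonneg_right (by linarith) hτ.le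
    have h2 : -γ / τ = -γ * (1 / τ) := by ring
    rw [hs]; rw [h2, hτu] at h1; nlinarith
  have hbγ : 0 ≤ b - γ := by rw [hb]; linarith
  have hγaτ : 0 ≤ γ * (a - γ) := mul_nonneg hγ0 (by linarith)
  have hDnn : 0 ≤ b ^ 2 + s := by
    rw [hb]
    nlinarith [sq_nonneg (a - γ + u), mul_nonneg hupos.le (sub_nonneg.mpr hγa.le)]
  set r : ℝ := Real.sqrt (b ^ 2 + s) with hr
  have hrnn : 0 ≤ r := Real.sqrt_nonneg _
  have hrsq : r ^ 2 = b ^ 2 + s := Real.sq_sqrt hDnn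
  have hsqle : (b - γ) ^ 2 ≤ r ^ 2 := by
    rw [hrsq, hb]; nlinarith
  have hkey : b - γ ≤ r := by nlinarith [sq_nonneg (r - (b - γ)), sq_nonneg (r + (b - γ))]
  have hdpos : 0 < b + r := by linarith
  rw [le_div_iff₀ hdpos]
  nlinarith [mul_nonneg hdpos.le (by linarith : (0:ℝ) ≤ r - (b - γ))]
end
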